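/- If (x*, y*) is a KKT point of (SPOcp), then the bi-active set is empty: there is no index i with x*_i = 0 and y*_i = 0. -/

import Mathlib

open Filter Topology

noncomputable section

/-- Euclidean n-space. -/
abbrev E (n : ℕ) : Type := EuclideanSpace ℝ (Fin n)

/-- KKT point of the complementarity reformulation (SPOcp). -/
def KKTcp {n m q : ℕ} (f : E n → ℝ) (g : Fin m → E n → ℝ) (h : Fin q → E n → ℝ)
    (p : Fin n → ℝ → ℝ) (x y : E n) : Prop :=
  (∀ i, g i x ≤ 0) ∧ (∀ j, h j x = 0) ∧ (∀ i, 0 ≤ x i) ∧ (∀ i, 0 ≤ y i) ∧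
  (∀ i, x i * y i = 0) ∧
  ∃ (lam : Fin m → ℝ) (mu : Fin q → ℝ) (νx νy γ : Fin n → ℝ),
    (∀ i, 0 ≤ lam i) ∧ (∀ i, lam i * g i x = 0) ∧
    (∀ i, 0 ≤ νx i) ∧ (∀ i, νx i * x i = 0) ∧
    (∀ i, 0 ≤ νy i) ∧ (∀ i, νy i * y i = 0) ∧
    (∀ k, gradient f x k + (∑ i, lam i * gradient (g i) x k) +
        (∑ j, mu j * gradient (h j) x k) - νx k + γ k * y k = 0) ∧
    (∀ i, deriv (p i) (y i) - νy i + γ i * x i = 0)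

/-!
At a bi-active index `i` the stationarity condition in `y` reads `p_i'(0) = (ν_y)_i ≥ 0`.
But `p_i` is convex and strictly smaller at `s_i > 0` than at `0`, so `p_i'(0)` is at most the
negative slope of the chord from `0` to `s_i`.
-/

theorem ConvexOn.deriv_neg_of_lt_of_apply_lt {S : Set ℝ} {f : ℝ → ℝ} {a b : ℝ}
    (hf : ConvexOn ℝ S f) (ha : a ∈ S) (hb : b ∈ S) (hfa : DifferentiableAt ℝ f a)
    (hab : a < b) (hfab : f b < f a) : deriv f a < 0 := by
  have hslope : slope f a b < 0 := by
    rw [slope_def_field]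
    exact div_neg_of_neg_of_pos (by linarith) (by linarith)
  exact (hf.deriv_le_slope ha hb hab hfa).trans_lt hslope

theorem KKTcp.deriv_nonneg_of_biactive {n m q : ℕ} {f : E n → ℝ} {g : Fin m → E n → ℝ}
    {h : Fin q → E n → ℝ} {p : Fin n → ℝ → ℝ} {x y : E n} (hKKT : KKTcp f g h p x y)
    {i : Fin n} (hx : x i = 0) (hy : y i = 0) : 0 ≤ deriv (p i) 0 := by
  obtain ⟨-, -, -, -, -, -, -, -, νy, γ, -, -, -, -, hνy, -, -, hstat⟩ := hKKT
  have hstat_i := hstat i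
  rw [hx, hy, mul_zero, add_zero, sub_eq_zero] at hstat_i
  exact hstat_i ▸ hνy i

theorem stmt_7_general {n m q : ℕ}
    (f : E n → ℝ) (g : Fin m → E n → ℝ) (h : Fin q → E n → ℝ)
    (p : Fin n → ℝ → ℝ) (s : Fin n → ℝ)
    (hp : ∀ i, ContDiff ℝ 1 (p i))
    (hconv : ∀ i, ConvexOn ℝ Set.univ (p i))
    (hspos : ∀ i, 0 < s i)
    (hstrict : ∀ i t, t ≠ s i → p i (s i) < p i t)
    (xstar ystar : E n)
    (hKKT : KKTcp f g h p xstar ystar) :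
    ¬ ∃ i, xstar i = 0 ∧ ystar i = 0 := by
  rintro ⟨i, hx, hy⟩
  have hneg : deriv (p i) 0 < 0 :=
    (hconv i).deriv_neg_of_lt_of_apply_lt (Set.mem_univ 0) (Set.mem_univ (s i))
      ((hp i).differentiable one_ne_zero).differentiableAt (hspos i)
      (hstrict i 0 (hspos i).ne)
  exact (hKKT.deriv_nonneg_of_biactive hx hy).not_gt hneg

/-- If (x*, y*) is a KKT point of (SPOcp), then the bi-active set
is empty: there is no index i with x*_i = 0 and y*_i = 0. -/
theorem stmt_7 {n m q : ℕ} (hn : 1 ≤ n) {ρ : ℝ} (hρ : 0 < ρ)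
    (f : E n → ℝ) (g : Fin m → E n → ℝ) (h : Fin q → E n → ℝ)
    (hf : ContDiff ℝ 1 f) (hg : ∀ i, ContDiff ℝ 1 (g i)) (hh : ∀ j, ContDiff ℝ 1 (h j))
    (p : Fin n → ℝ → ℝ) (s : Fin n → ℝ)
    (hp : ∀ i, ContDiff ℝ 1 (p i))
    (hconv : ∀ i, ConvexOn ℝ Set.univ (p i))
    (hspos : ∀ i, 0 < s i)
    (hmin : ∀ i t, p i (s i) ≤ p i t)
    (hstrict : ∀ i t, t ≠ s i → p i (s i) < p i t)
    (hscale : ∀ i, p i 0 - p i (s i) = ρ)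
    (xstar ystar : E n)
    (hKKT : KKTcp f g h p xstar ystar) :
    ¬ ∃ i, xstar i = 0 ∧ ystar i = 0 :=
  stmt_7_general f g h p s hp hconv hspos hstrict xstar ystar hKKT
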